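/- arXiv:1206.5167 — 2 statements merged into one kernel-verified Lean document; each statement's English description precedes it below -/
import Mathlib

section
/- Let V ⊆ ℝ^n be a regular space and x ∈ V. Then x is integral (all components are integers) if and only if x is a finite sum of primitive vectors of V, each conforming to x. -/
open Finset

variable {n : ℕ}

/-- The support of a vector. -/
def supp (x : Fin n → ℝ) : Set (Fin n) := {j | x j ≠ 0}

/-- A nonzero vector of `V` is elementary if no nonzero vector of `V` has support
properly contained in its support. -/
def IsElementary (V : Submodule ℝ (Fin n → ℝ)) (x : Fin n → ℝ) : Prop :=
  x ∈ V ∧ x ≠ 0 ∧ ∀ y ∈ V, y ≠ 0 → ¬ (supp y ⊂ supp x)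

/-- A primitive vector: elementary with entries in `{-1, 0, 1}`. -/
def IsPrimitive (V : Submodule ℝ (Fin n → ℝ)) (x : Fin n → ℝ) : Prop :=
  IsElementary V x ∧ ∀ j, x j ∈ ({-1, 0, 1} : Set ℝ)

/-- `y` conforms to `x`. -/
def Conforms (y x : Fin n → ℝ) : Prop := ∀ j, y j ≠ 0 → y j * x j > 0

/-- A regular space: the kernel of a totally unimodular matrix. -/
def IsRegularSpace (V : Submodule ℝ (Fin n → ℝ)) : Prop :=
  ∃ (m : ℕ) (A : Matrix (Fin m) (Fin n) ℝ),
    A.IsTotallyUnimodular ∧ V = LinearMap.ker A.mulVecLin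

/-- An `r`-path: a primitive vector with value `+1` at `r`. -/
def IsRPath (V : Submodule ℝ (Fin n → ℝ)) (r : Fin n) (P : Fin n → ℝ) : Prop :=
  IsPrimitive V P ∧ P r = 1

/-- Feasibility with respect to capacity `c` (no constraint at `r`). -/
def Feasible (c : Fin n → ℝ) (r : Fin n) (f : Fin n → ℝ) : Prop :=
  ∀ j, j ≠ r → 0 ≤ f j ∧ f j ≤ c j

/-- An `r`-path `P` is augmenting for the flow `f`. -/
def Augmenting (V : Submodule ℝ (Fin n → ℝ)) (c : Fin n → ℝ) (r : Fin n)
    (f P : Fin n → ℝ) : Prop :=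
  IsRPath V r P ∧ ∃ ε : ℝ, 0 < ε ∧ Feasible c r (f + ε • P)

/-- The 1-norm. -/
def onorm (x : Fin n → ℝ) : ℝ := ∑ j, |x j|

/-- A shortest augmenting `r`-path. -/
def ShortestAug (V : Submodule ℝ (Fin n → ℝ)) (c : Fin n → ℝ) (r : Fin n)
    (f P : Fin n → ℝ) : Prop :=
  Augmenting V c r f P ∧ ∀ Q, Augmenting V c r f Q → onorm P ≤ onorm Q

/-- `g` is obtained from `f` by maximal augmentation along `P`. -/
def MaxAug (c : Fin n → ℝ) (r : Fin n) (f P g : Fin n → ℝ) : Prop :=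
  ∃ ε : ℝ, 0 < ε ∧ g = f + ε • P ∧ Feasible c r g ∧
    ∀ ε' : ℝ, ε < ε' → ¬ Feasible c r (f + ε' • P)

/-- A conformal primitive decomposition of `P + Q` in which `M` and `J` are the two
`r`-path summands (`M` playing the role of `P ∧ Q` and `J` of `P ∨ Q`). -/
def MeetJoinDecomp (V : Submodule ℝ (Fin n → ℝ)) (r : Fin n)
    (P Q M J : Fin n → ℝ) : Prop :=
  ∃ (k : ℕ) (p : Fin k → Fin n → ℝ) (a b : Fin k),
    (∀ i, IsPrimitive V (p i)) ∧ (∀ i, Conforms (p i) (P + Q)) ∧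
    (∑ i, p i) = P + Q ∧ a ≠ b ∧ p a = M ∧ p b = J ∧
    p a r = 1 ∧ p b r = 1 ∧ ∀ i, p i r = 1 → i = a ∨ i = b

/-
Among the nonzero vectors of `V` conforming to a nonzero `x ∈ V`, one `y` of inclusion-minimal
support is elementary: subtracting from `y` the right multiple of a vector of smaller support
would give a conforming vector of even smaller support. In the kernel of a totally unimodular
matrix `A` an elementary vector `e` is, up to scaling, a `{0, ±1}`-vector: the columns of `A` on
`supp e \ {s}` are independent, and Cramer's rule on an invertible square submatrix of them
writes `e j / e s` as a quotient of two minors of `A`. For integral `x`, subtracting a conforming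
primitive vector `p` keeps `x - p` integral and conforming to `x` while lowering the 1-norm by
`onorm p ≥ 1`, so induction yields the decomposition; conversely primitive vectors are integral.
-/

open Matrix

namespace Matrix

variable {K m ι : Type*} [Field K] [Fintype ι] [DecidableEq ι]

theorem exists_isUnit_submatrix_of_linearIndependent_col [Fintype m] {B : Matrix m ι K}
    (hB : LinearIndependent K B.col) : ∃ f : ι → m, IsUnit (B.submatrix f id) := by
  obtain ⟨κ, a, -, hspan, hli⟩ := exists_linearIndependent' K B.row
  have : Fintype κ := @Fintype.ofFinite _ hli.finite
  have hcard : Fintype.card κ = Fintype.card ι := by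
    rw [← finrank_span_eq_card hli, hspan, ← rank_eq_finrank_span_row, ← rank_transpose,
      LinearIndependent.rank_matrix (by simpa using hB)]
  let e := Fintype.equivOfCardEq hcard
  refine ⟨a ∘ e.symm, linearIndependent_rows_iff_isUnit.mp ?_⟩
  exact hli.comp e.symm e.symm.injective

theorem IsTotallyUnimodular.mem_range_cast_of_submatrix_mulVec_eq_col {n : Type*} {A : Matrix m n K}
    (hA : A.IsTotallyUnimodular) {f : ι → m} {g : ι → n} (hM : IsUnit (A.submatrix f g))
    {s : n} {u : ι → K} (hu : A.submatrix f g *ᵥ u = fun r => A (f r) s) (i : ι) :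
    u i ∈ Set.range SignType.cast := by
  classical
  set M := A.submatrix f g
  obtain ⟨a, ha⟩ := (isTotallyUnimodular_iff_fintype A).mp hA ι f g
  obtain ⟨b, hb⟩ := (isTotallyUnimodular_iff_fintype A).mp hA ι f (Function.update g i s)
  have hcramer : M.det • u = cramer M (fun r => A (f r) s) :=
    mulVec_injective_iff_isUnit.mpr hM <| by rw [mulVec_cramer, mulVec_smul, hu]
  have hb' : cramer M (fun r => A (f r) s) i = b := by
    rw [cramer_apply, hb]
    congr 1
    ext r t
    rcases eq_or_ne t i with rfl | h <;> simp [M, *]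
  have ha0 : a ≠ 0 := by
    rintro rfl
    exact (isUnit_iff_isUnit_det M).mp hM |>.ne_zero (by simpa [M] using ha.symm)
  have hunit : (a : K) * a = 1 := by rcases a with _ | _ | _ <;> simp at ha0 ⊢
  have h : (a : K) * u i = b := by rw [ha, ← hb', ← hcramer]; rfl
  refine ⟨a * b, ?_⟩
  rw [SignType.coe_mul, ← h, ← mul_assoc, hunit, one_mul]
end Matrix

theorem Conforms.refl (x : Fin n → ℝ) : Conforms x x := fun _ hx => mul_self_pos.mpr hx

theorem Conforms.trans {x y z : Fin n → ℝ} (hxy : Conforms x y) (hyz : Conforms y z) :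
    Conforms x z := by
  intro j hx
  have hxy := hxy j hx
  have hyz := hyz j (right_ne_zero_of_mul hxy.ne')
  nlinarith [mul_pos hxy hyz, sq_nonneg (y j)]

theorem Conforms.of_mul_nonneg {y x : Fin n → ℝ} (h : ∀ j, 0 ≤ y j * x j)
    (hsupp : ∀ j, x j = 0 → y j = 0) : Conforms y x := fun j hy =>
  (h j).lt_of_ne' (mul_ne_zero hy fun hx => hy (hsupp j hx))

theorem Conforms.supp_subset {y x : Fin n → ℝ} (h : Conforms y x) : supp y ⊆ supp x :=
  fun j hy => right_ne_zero_of_mul (h j hy).ne'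

theorem conforms_smul_of_pos {c : ℝ} (hc : 0 < c) (x : Fin n → ℝ) : Conforms (c • x) x := by
  intro j hj
  have hx : x j ≠ 0 := right_ne_zero_of_mul hj
  simpa [mul_assoc] using mul_pos hc (mul_self_pos.mpr hx)

theorem supp_smul {c : ℝ} (hc : c ≠ 0) (x : Fin n → ℝ) : supp (c • x) = supp x := by
  ext j
  simp [supp, hc]

theorem IsElementary.smul {V : Submodule ℝ (Fin n → ℝ)} {y : Fin n → ℝ} (hy : IsElementary V y)
    {c : ℝ} (hc : c ≠ 0) : IsElementary V (c • y) :=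
  ⟨V.smul_mem c hy.1, smul_ne_zero hc hy.2.1, by rw [supp_smul hc]; exact hy.2.2⟩

theorem exists_conforms_sub_smul {y z : Fin n → ℝ} (hz : z ≠ 0) (hzy : supp z ⊂ supp y) :
    ∃ t : ℝ, y - t • z ≠ 0 ∧ Conforms (y - t • z) y ∧ supp (y - t • z) ⊂ supp y := by
  classical
  obtain ⟨j₀, hj₀⟩ := Function.ne_iff.mp hz
  obtain ⟨i, hi, hmin⟩ := Finset.exists_min_image (Finset.univ.filter fun j => z j ≠ 0)
    (fun j => |y j / z j|) ⟨j₀, by simpa using hj₀⟩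
  have hzi : z i ≠ 0 := by simpa using hi
  -- `t` is the ratio `y i / z i` of least modulus: `y - t • z` vanishes at `i` and, elsewhere,
  -- either vanishes or keeps the sign of `y`.
  set t := y i / z i
  have hyi : (y - t • z) i = 0 := by simp [t, hzi]
  have hconf : Conforms (y - t • z) y := by
    refine Conforms.of_mul_nonneg (fun j => ?_) fun j hyj => ?_
    · by_cases hzj : z j = 0
      · simpa [hzj] using mul_self_nonneg (y j)
      set r := y j / z j
      have htr : t * r ≤ r * r := by
        calc t * r ≤ |t| * |r| := by rw [← abs_mul]; exact le_abs_self _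
          _ ≤ |r| * |r| := mul_le_mul_of_nonneg_right (hmin j (by simpa using hzj)) (abs_nonneg r)
          _ = r * r := abs_mul_abs_self r
      have hyj : y j = r * z j := by simp [r, hzj]
      have : (y - t • z) j * y j = z j * z j * (r * r - t * r) := by simp [hyj]; ring
      rw [this]
      exact mul_nonneg (mul_self_nonneg _) (by linarith)
    · have hzj : z j = 0 := by_contra fun h => hzy.subset h hyj
      simp [hyj, hzj]
  refine ⟨t, fun h0 => ?_, hconf, hconf.supp_subset.ssubset_of_ne fun h => ?_⟩
  · obtain ⟨j, hyj, hzj⟩ := Set.exists_of_ssubset hzy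
    have : y j - t * z j = 0 := by simpa using congrFun h0 j
    exact hyj (by simpa [show z j = 0 by simpa [supp] using hzj] using this)
  · have hi' : i ∈ supp (y - t • z) := h ▸ hzy.subset hzi
    exact hi' hyi

theorem exists_isElementary_conforms {V : Submodule ℝ (Fin n → ℝ)} {x : Fin n → ℝ} (hx : x ∈ V)
    (hx0 : x ≠ 0) : ∃ y, IsElementary V y ∧ Conforms y x := by
  obtain ⟨y, ⟨hyV, hy0, hyx⟩, hmin⟩ := (InvImage.wf supp wellFounded_lt).has_min
    {y | y ∈ V ∧ y ≠ 0 ∧ Conforms y x} ⟨x, hx, hx0, Conforms.refl x⟩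
  refine ⟨y, ⟨hyV, hy0, fun z hzV hz0 hzy => ?_⟩, hyx⟩
  obtain ⟨t, ht0, hconf, hsupp⟩ := exists_conforms_sub_smul hz0 hzy
  exact hmin _ ⟨V.sub_mem hyV (V.smul_mem t hzV), ht0, hconf.trans hyx⟩ hsupp

section TotallyUnimodularKernel

variable {m : ℕ} {A : Matrix (Fin m) (Fin n) ℝ} {e : Fin n → ℝ}

theorem IsElementary.linearIndepOn_col (he : IsElementary (LinearMap.ker A.mulVecLin) e)
    {T : Set (Fin n)} (hT : T ⊂ supp e) : LinearIndepOn ℝ A.col T := by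
  classical
  refine linearIndepOn_iff''.mpr fun t g htT hg hsum => ?_
  have hgker : g ∈ LinearMap.ker A.mulVecLin := by
    rw [LinearMap.mem_ker, mulVecLin_apply, ← hsum,
      Finset.sum_subset (Finset.subset_univ t) fun i _ hi => by simp [hg i hi]]
    ext r
    simp [mulVec, dotProduct, Finset.sum_apply, mul_comm]
  have hgsupp : supp g ⊂ supp e :=
    (show supp g ⊆ T from fun j hj => htT (by_contra fun h => hj (hg j h))).trans_ssubset hT
  have hg0 : g = 0 := by_contra fun h => he.2.2 g hgker h hgsupp
  simp [hg0]

theorem IsElementary.exists_signType_mul (hA : A.IsTotallyUnimodular)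
    (he : IsElementary (LinearMap.ker A.mulVecLin) e) {s : Fin n} (hs : e s ≠ 0) (j : Fin n) :
    ∃ c : SignType, e j = c * e s := by
  classical
  set T := supp e \ {s}
  by_cases hj : j ∈ T
  swap
  · by_cases hjs : j = s
    · exact ⟨1, by simp [hjs]⟩
    · exact ⟨0, by simpa [T, supp, hjs] using hj⟩
  obtain ⟨f, hf⟩ := exists_isUnit_submatrix_of_linearIndependent_col
    (B := A.submatrix id ((↑) : T → Fin n))
    (he.linearIndepOn_col (Set.sdiff_singleton_ssubset.mpr hs))
  rw [submatrix_submatrix] at hf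
  have hu : A.submatrix f (↑) *ᵥ (fun t : T => -(e t / e s)) = fun r => A (f r) s := by
    ext r
    have hker : ∑ t, A (f r) t * e t = 0 := congrFun (he.1 : A *ᵥ e = 0) (f r)
    have hsum : ∑ t : T, A (f r) t * e t = -(A (f r) s * e s) := by
      rw [Finset.sum_set_coe (f := fun t => A (f r) t * e t),
        Finset.sum_subset (s₂ := Finset.univ.erase s) (by intro; simp) fun t ht hT => ?_]
      · exact eq_neg_of_add_eq_zero_left ((Finset.sum_erase_add _ _ (Finset.mem_univ s)).trans hker)
      have het : e t = 0 := by_contra fun h =>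
        hT (Set.mem_toFinset.mpr ⟨h, by simpa using (Finset.mem_erase.mp ht).1⟩)
      simp [het]
    simp only [mulVec, dotProduct, submatrix_apply, mul_neg, Finset.sum_neg_distrib,
      ← mul_div_assoc, ← Finset.sum_div, hsum]
    field_simp
  obtain ⟨c, hc⟩ := hA.mem_range_cast_of_submatrix_mulVec_eq_col hf hu ⟨j, hj⟩
  refine ⟨-c, ?_⟩
  field_simp at hc
  simp [hc]

end TotallyUnimodularKernel

theorem SignType.cast_mem_signs (c : SignType) : (c : ℝ) ∈ ({-1, 0, 1} : Set ℝ) := by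
  cases c <;> simp

theorem IsRegularSpace.exists_isPrimitive_conforms_of_isElementary
    {V : Submodule ℝ (Fin n → ℝ)} (hV : IsRegularSpace V) {y : Fin n → ℝ}
    (hy : IsElementary V y) : ∃ p, IsPrimitive V p ∧ Conforms p y := by
  obtain ⟨m, A, hA, rfl⟩ := hV
  obtain ⟨s, hs⟩ := Function.ne_iff.mp hy.2.1
  have habs : 0 < |y s| := abs_pos.mpr hs
  refine ⟨|y s|⁻¹ • y, ⟨hy.smul (inv_ne_zero habs.ne'), fun j => ?_⟩,
    conforms_smul_of_pos (inv_pos.mpr habs) y⟩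
  obtain ⟨c, hc⟩ := hy.exists_signType_mul hA hs j
  have hj : (|y s|⁻¹ • y) j = ((c * SignType.sign (y s) : SignType) : ℝ) := by
    have hsign : y s = SignType.sign (y s) * |y s| := (sign_mul_abs (y s)).symm
    rw [Pi.smul_apply, smul_eq_mul, hc, SignType.coe_mul]
    field_simp
    linear_combination (c : ℝ) * hsign
  rw [hj]
  exact SignType.cast_mem_signs _

theorem IsRegularSpace.exists_isPrimitive_conforms {V : Submodule ℝ (Fin n → ℝ)}
    (hV : IsRegularSpace V) {x : Fin n → ℝ} (hx : x ∈ V) (hx0 : x ≠ 0) :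
    ∃ p, IsPrimitive V p ∧ Conforms p x := by
  obtain ⟨y, hy, hyx⟩ := exists_isElementary_conforms hx hx0
  obtain ⟨p, hp, hpy⟩ := hV.exists_isPrimitive_conforms_of_isElementary hy
  exact ⟨p, hp, hpy.trans hyx⟩

theorem abs_sub_eq_of_mul_nonneg {a b : ℝ} (hba : 0 ≤ b * a) (hle : |b| ≤ |a|) :
    |a - b| = |a| - |b| := by
  rcases abs_cases a with ⟨ha, ha'⟩ | ⟨ha, ha'⟩ <;>
    rcases abs_cases b with ⟨hb, hb'⟩ | ⟨hb, hb'⟩ <;>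
    rcases abs_cases (a - b) with ⟨hab, hab'⟩ | ⟨hab, hab'⟩ <;> nlinarith

theorem Conforms.onorm_sub {p x : Fin n → ℝ} (hp : Conforms p x) (hle : ∀ j, |p j| ≤ |x j|) :
    onorm (x - p) = onorm x - onorm p := by
  rw [onorm, onorm, onorm, ← Finset.sum_sub_distrib]
  refine Finset.sum_congr rfl fun j _ => abs_sub_eq_of_mul_nonneg ?_ (hle j)
  by_cases hpj : p j = 0
  · simp [hpj]
  · exact (hp j hpj).le

theorem Conforms.sub_conforms {p x : Fin n → ℝ} (hp : Conforms p x) (hle : ∀ j, |p j| ≤ |x j|) :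
    Conforms (x - p) x := by
  refine Conforms.of_mul_nonneg (fun j => ?_) fun j hxj => ?_
  · by_cases hpj : p j = 0
    · simpa [hpj] using mul_self_nonneg (x j)
    have hpx := hp j hpj
    have := hle j
    rcases abs_cases (x j) with ⟨hx, hx'⟩ | ⟨hx, hx'⟩ <;>
      rcases abs_cases (p j) with ⟨h, h'⟩ | ⟨h, h'⟩ <;> simp only [Pi.sub_apply] <;> nlinarith
  · have : |p j| ≤ 0 := by simpa [hxj] using hle j
    simp [hxj, abs_nonpos_iff.mp this]

theorem exists_int_eq_of_mem_signs {a : ℝ} (h : a ∈ ({-1, 0, 1} : Set ℝ)) : ∃ z : ℤ, a = z := by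
  rcases h with rfl | rfl | rfl
  exacts [⟨-1, by simp⟩, ⟨0, by simp⟩, ⟨1, by simp⟩]

theorem abs_le_abs_of_mem_signs {a b : ℝ} (hb : b ∈ ({-1, 0, 1} : Set ℝ)) (ha : ∃ z : ℤ, a = z)
    (hba : b ≠ 0 → 0 < b * a) : |b| ≤ |a| := by
  by_cases hb0 : b = 0
  · simp [hb0]
  obtain ⟨z, rfl⟩ := ha
  have hz : z ≠ 0 := by rintro rfl; simpa using hba hb0
  calc |b| ≤ 1 := by rcases hb with rfl | rfl | rfl <;> simp
    _ ≤ |(z : ℝ)| := by rw [← Int.cast_abs]; exact_mod_cast Int.one_le_abs hz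

theorem one_le_onorm_of_isPrimitive {V : Submodule ℝ (Fin n → ℝ)} {p : Fin n → ℝ}
    (hp : IsPrimitive V p) : 1 ≤ onorm p := by
  obtain ⟨s, hs⟩ := Function.ne_iff.mp hp.1.2.1
  calc (1 : ℝ) = |p s| := by rcases hp.2 s with h | h | h <;> simp_all
    _ ≤ onorm p := Finset.single_le_sum (fun j _ => abs_nonneg (p j)) (Finset.mem_univ s)

theorem IsRegularSpace.exists_conformal_primitive_sum_of_onorm_lt {V : Submodule ℝ (Fin n → ℝ)}
    (hV : IsRegularSpace V) (N : ℕ) {x : Fin n → ℝ} (hx : x ∈ V)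
    (hint : ∀ j, ∃ z : ℤ, x j = z) (hN : onorm x < N) :
    ∃ (k : ℕ) (p : Fin k → Fin n → ℝ),
      (∀ i, IsPrimitive V (p i)) ∧ (∀ i, Conforms (p i) x) ∧ (∑ i, p i) = x := by
  induction N generalizing x with
  | zero =>
    have : 0 ≤ onorm x := Finset.sum_nonneg fun j _ => abs_nonneg (x j)
    exact absurd hN (by simpa using this)
  | succ N ih =>
    by_cases hx0 : x = 0
    · exact ⟨0, ![], finZeroElim, finZeroElim, by simp [hx0]⟩
    obtain ⟨p, hp, hpx⟩ := hV.exists_isPrimitive_conforms hx hx0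
    have hle : ∀ j, |p j| ≤ |x j| := fun j => abs_le_abs_of_mem_signs (hp.2 j) (hint j) (hpx j)
    have hint' : ∀ j, ∃ z : ℤ, (x - p) j = z := fun j => by
      obtain ⟨a, ha⟩ := hint j
      obtain ⟨b, hb⟩ := exists_int_eq_of_mem_signs (hp.2 j)
      exact ⟨a - b, by simp [ha, hb]⟩
    have hN' : onorm (x - p) < N := by
      rw [hpx.onorm_sub hle]
      push_cast at hN
      linarith [one_le_onorm_of_isPrimitive hp]
    obtain ⟨k, q, hq, hqx, hsum⟩ := ih (V.sub_mem hx hp.1.1) hint' hN'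
    refine ⟨k + 1, Fin.cons p q, Fin.cases hp hq,
      Fin.cases hpx fun i => (hqx i).trans (hpx.sub_conforms hle), ?_⟩
    rw [Fin.sum_cons, hsum, add_sub_cancel]

theorem stmt3 (V : Submodule ℝ (Fin n → ℝ)) (hV : IsRegularSpace V)
    (x : Fin n → ℝ) (hx : x ∈ V) :
    (∀ j, ∃ z : ℤ, x j = (z : ℝ)) ↔
      ∃ (k : ℕ) (p : Fin k → Fin n → ℝ),
        (∀ i, IsPrimitive V (p i)) ∧ (∀ i, Conforms (p i) x) ∧ (∑ i, p i) = x := by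
  constructor
  · intro hint
    obtain ⟨N, hN⟩ := exists_nat_gt (onorm x)
    exact hV.exists_conformal_primitive_sum_of_onorm_lt N hx hint hN
  · rintro ⟨k, p, hp, -, rfl⟩ j
    choose z hz using fun i => exists_int_eq_of_mem_signs ((hp i).2 j)
    exact ⟨∑ i, z i, by simp [Finset.sum_apply, hz]⟩
end

section
/- Let V ⊆ ℝ^n be a regular space with capacity c, f a feasible flow, and P, Q shortest augmenting r-paths for f (of minimum 1-norm among all augmenting r-paths). Then P∧Q and P∨Q are also shortest augmenting r-paths for f. -/
open Finset

variable {n : ℕ}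

/-! Each coordinate of a sign vector conforming to `P + Q` is `0` or agrees with `P` or with `Q`,
so augmenting along it by the smaller of the two step sizes stays feasible. In a conformal
decomposition 1-norms add, so `‖M‖₁ + ‖J‖₁ ≤ ‖P + Q‖₁ ≤ ‖P‖₁ + ‖Q‖₁`; as `P` and `Q` are shortest
and `M`, `J` are augmenting, all four lengths coincide. -/

lemma sum_abs_eq_abs_sum_of_conforms {ι : Type*} (s : Finset ι) (a : ι → ℝ)
    (h : ∀ i ∈ s, a i ≠ 0 → 0 < a i * ∑ j ∈ s, a j) :
    ∑ i ∈ s, |a i| = |∑ i ∈ s, a i| := by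
  rcases le_total 0 (∑ i ∈ s, a i) with hS | hS
  · have ha : ∀ i ∈ s, 0 ≤ a i := fun i hi => by
      by_contra! hneg
      nlinarith [h i hi hneg.ne]
    rw [abs_of_nonneg hS]
    exact Finset.sum_congr rfl fun i hi => abs_of_nonneg (ha i hi)
  · have ha : ∀ i ∈ s, a i ≤ 0 := fun i hi => by
      by_contra! hpos
      nlinarith [h i hi hpos.ne']
    rw [abs_of_nonpos hS, ← Finset.sum_neg_distrib]
    exact Finset.sum_congr rfl fun i hi => abs_of_nonpos (ha i hi)

lemma onorm_sum_of_conforms {ι : Type*} [Fintype ι] (p : ι → Fin n → ℝ) (x : Fin n → ℝ)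
    (hconf : ∀ i, Conforms (p i) x) (hsum : ∑ i, p i = x) :
    ∑ i, onorm (p i) = onorm x := by
  unfold onorm
  rw [Finset.sum_comm]
  refine Finset.sum_congr rfl fun j _ => ?_
  have hx : ∑ i, p i j = x j := by simp [← hsum, Finset.sum_apply]
  rw [← hx]
  exact sum_abs_eq_abs_sum_of_conforms _ _ fun i _ hi => hx ▸ hconf i j hi

lemma onorm_add_le (x y : Fin n → ℝ) : onorm (x + y) ≤ onorm x + onorm y := by
  unfold onorm
  rw [← Finset.sum_add_distrib]
  exact Finset.sum_le_sum fun j _ => abs_add_le (x j) (y j)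

lemma onorm_nonneg (x : Fin n → ℝ) : 0 ≤ onorm x :=
  Finset.sum_nonneg fun j _ => abs_nonneg (x j)

lemma eq_zero_or_eq_or_eq_of_conforms {P Q R : Fin n → ℝ}
    (hP : ∀ j, P j ∈ ({-1, 0, 1} : Set ℝ)) (hQ : ∀ j, Q j ∈ ({-1, 0, 1} : Set ℝ))
    (hR : ∀ j, R j ∈ ({-1, 0, 1} : Set ℝ)) (hconf : Conforms R (P + Q)) (j : Fin n) :
    R j = 0 ∨ R j = P j ∨ R j = Q j := by
  have hj := hconf j
  simp only [Pi.add_apply] at hj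
  rcases hP j with hp | hp | hp <;> rcases hQ j with hq | hq | hq <;>
    rcases hR j with hr | hr | hr <;> simp_all <;> norm_num at hj

lemma convex_setOf_feasible (c : Fin n → ℝ) (r : Fin n) : Convex ℝ {g | Feasible c r g} := by
  intro x hx y hy a b ha hb hab j hj
  obtain ⟨hx0, hxc⟩ := hx j hj
  obtain ⟨hy0, hyc⟩ := hy j hj
  simp only [Pi.add_apply, Pi.smul_apply, smul_eq_mul]
  constructor <;> nlinarith

lemma Feasible.add_smul_of_le {c : Fin n → ℝ} {r : Fin n} {f P : Fin n → ℝ} {ε δ : ℝ}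
    (hf : Feasible c r f) (hε : Feasible c r (f + ε • P)) (hδ : 0 ≤ δ) (hδε : δ ≤ ε) :
    Feasible c r (f + δ • P) := by
  rcases hδ.eq_or_lt with rfl | hδ
  · simpa using hf
  have hε0 : 0 < ε := hδ.trans_le hδε
  have hmem := (convex_setOf_feasible c r).add_smul_mem hf hε
    ⟨div_nonneg hδ.le hε0.le, (div_le_one hε0).2 hδε⟩
  rwa [smul_smul, div_mul_cancel₀ δ hε0.ne'] at hmem

lemma Augmenting.of_conforms {V : Submodule ℝ (Fin n → ℝ)} {c : Fin n → ℝ} {r : Fin n}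
    {f P Q R : Fin n → ℝ} (hf : Feasible c r f) (hP : Augmenting V c r f P)
    (hQ : Augmenting V c r f Q) (hR : IsRPath V r R) (hconf : Conforms R (P + Q)) :
    Augmenting V c r f R := by
  obtain ⟨hPpath, εP, hεP, hfP⟩ := hP
  obtain ⟨hQpath, εQ, hεQ, hfQ⟩ := hQ
  have hfP' := hf.add_smul_of_le hfP (lt_min hεP hεQ).le (min_le_left εP εQ)
  have hfQ' := hf.add_smul_of_le hfQ (lt_min hεP hεQ).le (min_le_right εP εQ)
  refine ⟨hR, min εP εQ, lt_min hεP hεQ, fun j hj => ?_⟩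
  simp only [Pi.add_apply, Pi.smul_apply, smul_eq_mul] at hfP' hfQ' ⊢
  rcases eq_zero_or_eq_or_eq_of_conforms hPpath.1.2 hQpath.1.2 hR.1.2 hconf j
    with h | h | h <;> rw [h]
  · simpa using hf j hj
  · exact hfP' j hj
  · exact hfQ' j hj

lemma ShortestAug.of_onorm_le {V : Submodule ℝ (Fin n → ℝ)} {c : Fin n → ℝ} {r : Fin n}
    {f P M : Fin n → ℝ} (hP : ShortestAug V c r f P) (hM : Augmenting V c r f M)
    (hMP : onorm M ≤ onorm P) : ShortestAug V c r f M :=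
  ⟨hM, fun R hR => hMP.trans (hP.2 R hR)⟩

section MeetJoinDecomp

variable {V : Submodule ℝ (Fin n → ℝ)} {r : Fin n} {P Q M J : Fin n → ℝ}

lemma MeetJoinDecomp.swap (h : MeetJoinDecomp V r P Q M J) : MeetJoinDecomp V r P Q J M := by
  obtain ⟨k, p, a, b, hprim, hconf, hsum, hab, hpa, hpb, har, hbr, hrab⟩ := h
  exact ⟨k, p, b, a, hprim, hconf, hsum, hab.symm, hpb, hpa, hbr, har,
    fun i hi => (hrab i hi).symm⟩

lemma MeetJoinDecomp.isRPath (h : MeetJoinDecomp V r P Q M J) : IsRPath V r M := by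
  obtain ⟨k, p, a, b, hprim, -, -, -, rfl, -, har, -⟩ := h
  exact ⟨hprim a, har⟩

lemma MeetJoinDecomp.conforms (h : MeetJoinDecomp V r P Q M J) : Conforms M (P + Q) := by
  obtain ⟨k, p, a, b, -, hconf, -, -, rfl, -⟩ := h
  exact hconf a

lemma MeetJoinDecomp.onorm_add_le (h : MeetJoinDecomp V r P Q M J) :
    onorm M + onorm J ≤ onorm P + onorm Q := by
  obtain ⟨k, p, a, b, -, hconf, hsum, hab, rfl, rfl, -⟩ := h
  calc onorm (p a) + onorm (p b)
      _ = ∑ i ∈ {a, b}, onorm (p i) := by rw [Finset.sum_pair hab]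
      _ ≤ ∑ i, onorm (p i) :=
        Finset.sum_le_sum_of_subset_of_nonneg (Finset.subset_univ _)
          fun i _ _ => onorm_nonneg (p i)
      _ = onorm (P + Q) := onorm_sum_of_conforms p (P + Q) hconf hsum
      _ ≤ onorm P + onorm Q := onorm_add_le P Q

end MeetJoinDecomp

theorem stmt10_general (V : Submodule ℝ (Fin n → ℝ))
    (r : Fin n) (c : Fin n → ℝ)
    (f : Fin n → ℝ) (hf : Feasible c r f)
    (P Q M J : Fin n → ℝ)
    (hP : ShortestAug V c r f P) (hQ : ShortestAug V c r f Q)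
    (hMJ : MeetJoinDecomp V r P Q M J) :
    ShortestAug V c r f M ∧ ShortestAug V c r f J := by
  have augmenting : ∀ {M J}, MeetJoinDecomp V r P Q M J → Augmenting V c r f M :=
    fun h => hP.1.of_conforms hf hQ.1 h.isRPath h.conforms
  have shortest : ∀ {M J}, MeetJoinDecomp V r P Q M J → ShortestAug V c r f M := by
    intro M J h
    refine hP.of_onorm_le (augmenting h) ?_
    have hJ := hP.2 J (augmenting h.swap)
    have hQP := hQ.2 P hP.1
    linarith [h.onorm_add_le]
  exact ⟨shortest hMJ, shortest hMJ.swap⟩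

theorem stmt10 (V : Submodule ℝ (Fin n → ℝ)) (hV : IsRegularSpace V)
    (r : Fin n) (c : Fin n → ℝ) (hc : ∀ j, j ≠ r → 0 ≤ c j)
    (f : Fin n → ℝ) (hfV : f ∈ V) (hf : Feasible c r f)
    (P Q M J : Fin n → ℝ)
    (hP : ShortestAug V c r f P) (hQ : ShortestAug V c r f Q)
    (hMJ : MeetJoinDecomp V r P Q M J) :
    ShortestAug V c r f M ∧ ShortestAug V c r f J :=
  stmt10_general V r c f hf P Q M J hP hQ hMJ
end
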